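/- arXiv:1603.00227 — 2 statements merged into one kernel-verified Lean document; each statement's English description precedes it below -/
import Mathlib

section
/- Let γ : ℝ/Lℤ → ℝ³ be an arclength parametrization of a closed Lipschitz curve. If γ is twice differentiable at s, then the security radius r(s) := sup{ r > 0 : |γ(s+h) − γ(s)| ≥ r/2 for all |h| ≥ r, and |γ'(s+h) − γ'(s)| ≤ |h|/r for all |h| ≤ r } satisfies 1/r(s) ≥ |γ''(s)|, i.e. the reciprocal security radius dominates the curvature. -/
open MeasureTheory

/-- Distance modulo `L·ℤ` of a real number from `0`. -/
noncomputable def pdist (L a : ℝ) : ℝ := sInf {d : ℝ | ∃ k : ℤ, d = |a - L * k|}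

/-- The security radius of a closed curve `γ` (with tangent `γd`) at parameter `s`:
the supremum of radii `r > 0` such that `|γ(s+h) - γ(s)| ≥ r/2` for `|h| ≥ r` and
`|γ'(s+h) - γ'(s)| ≤ |h|/r` for `|h| ≤ r` (distances in the parameter taken mod `Lℤ`).
If no such `r` exists, `sSup ∅ = 0`. -/
noncomputable def securityRadius (L : ℝ) (γ γd : ℝ → EuclideanSpace ℝ (Fin 3)) (s : ℝ) : ℝ :=
  sSup {r : ℝ | 0 < r ∧
    (∀ h : ℝ, r ≤ pdist L h → r / 2 ≤ ‖γ (s + h) - γ s‖) ∧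
    (∀ h : ℝ, pdist L h ≤ r → ‖γd (s + h) - γd s‖ ≤ pdist L h / r)}

lemma pdist_le_abs (L a : ℝ) : pdist L a ≤ |a| := by
  apply csInf_le
  · exact ⟨0, fun d ⟨k, hk⟩ => hk ▸ abs_nonneg _⟩
  · exact ⟨0, by simp⟩

/-- if the arclength parametrization `γ` is twice differentiable at `s`
then the reciprocal security radius dominates the curvature: `1/r(s) ≥ |γ''(s)|`,
equivalently `r(s) · |γ''(s)| ≤ 1`. -/
theorem stmt_0 (L : ℝ) (hL : 0 < L) (γ γd : ℝ → EuclideanSpace ℝ (Fin 3))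
    (γdd : EuclideanSpace ℝ (Fin 3))
    (hper : ∀ t, γ (t + L) = γ t)
    (hderiv : ∀ t, HasDerivAt γ (γd t) t)
    (hunit : ∀ t, ‖γd t‖ = 1)
    (s : ℝ) (hdd : HasDerivAt γd γdd s) :
    securityRadius L γ γd s * ‖γdd‖ ≤ 1 := by
  have key : ∀ r ∈ {r : ℝ | 0 < r ∧
      (∀ h : ℝ, r ≤ pdist L h → r / 2 ≤ ‖γ (s + h) - γ s‖) ∧
      (∀ h : ℝ, pdist L h ≤ r → ‖γd (s + h) - γd s‖ ≤ pdist L h / r)},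
      r * ‖γdd‖ ≤ 1 := by
    rintro r ⟨hr, -, h2⟩
    have hnorm : ‖γdd‖ ≤ 1 / r := by
      have hf : HasFDerivAt γd (ContinuousLinearMap.smulRight (1 : ℝ →L[ℝ] ℝ) γdd) s :=
        hdd.hasFDerivAt
      have hle : ‖ContinuousLinearMap.smulRight (1 : ℝ →L[ℝ] ℝ) γdd‖ ≤ 1 / r := by
        apply hf.le_of_lip' (by positivity)
        filter_upwards [Metric.ball_mem_nhds s hr] with x hx
        have hd : pdist L (x - s) ≤ r := by
          refine (pdist_le_abs L _).trans ?_
          rw [Metric.mem_ball, Real.dist_eq] at hx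
          exact hx.le
        have := h2 (x - s) hd
        rw [add_sub_cancel] at this
        refine this.trans ?_
        rw [div_le_iff₀ hr] at *
        calc pdist L (x - s) ≤ |x - s| := pdist_le_abs L _
          _ = ‖x - s‖ := rfl
          _ ≤ 1 / r * ‖x - s‖ * r := by
              rw [mul_comm, ← mul_assoc, mul_one_div_cancel hr.ne', one_mul]
      calc ‖γdd‖ = ‖ContinuousLinearMap.smulRight (1 : ℝ →L[ℝ] ℝ) γdd‖ := by
              simp [ContinuousLinearMap.norm_smulRight_apply]
        _ ≤ 1 / r := hle
    calc r * ‖γdd‖ ≤ r * (1 / r) := by nlinarith [hr]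
      _ = 1 := mul_one_div_cancel hr.ne'
  rcases eq_or_lt_of_le (norm_nonneg γdd) with h0 | h0
  · simp [← h0]
  · have hsup : securityRadius L γ γd s ≤ 1 / ‖γdd‖ := by
      apply Real.sSup_le
      · intro r hr
        have := key r hr
        rw [le_div_iff₀ h0]
        linarith
      · positivity
    calc securityRadius L γ γd s * ‖γdd‖ ≤ 1 / ‖γdd‖ * ‖γdd‖ :=
          mul_le_mul_of_nonneg_right hsup (norm_nonneg _)
      _ = 1 := by field_simp
end

section
/- Let γ : ℝ/ℤ → ℝ³ be a closed unit-speed curve with security radius r(·) bounded below on a neighborhood of s = 0, with γ(0) = 0, γ'(0) = e₃, and r₀ := r(0). Then for all 0 < h < r₀ one has (writing γ = (γ_⊥, γ_∥) ∈ ℝ² × ℝ): γ_∥'(h) ≥ 1 − h²/(2r₀²), |γ_⊥'(h)| ≤ h/r₀, h ≥ γ_∥(h) ≥ h(1 − h²/(6r₀²)), and |γ_⊥(h)| ≤ h²/(2r₀). -/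
open MeasureTheory
open scoped ENNReal NNReal

noncomputable section

abbrev E3 := EuclideanSpace ℝ (Fin 3)

end

/-!
A Lipschitz curve is the integral of its a.e. derivative, so `γ h = ∫₀ʰ γ'`. For a.e. `t ∈ [0, r₀]`
the tangent `γ' t` is a unit vector within `t / r₀` of `e₃`. For unit vectors
`‖v - e₃‖² = 2 - 2 ⟪e₃, v⟫`, and the component of `v` orthogonal to `e₃` is no longer than
`v - e₃`; this gives the pointwise bounds on `γ'`, and integrating them over `[0, h]` gives the
bounds on `γ`.
-/

open Set intervalIntegral
open scoped RealInnerProductSpace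

section FTC

variable {E : Type*} [NormedAddCommGroup E] [NormedSpace ℝ E] [CompleteSpace E]
  {f f' : ℝ → E} {K : ℝ≥0}

theorem LipschitzWith.intervalIntegrable_of_ae_hasDerivAt (hf : LipschitzWith K f)
    (hd : ∀ᵐ t, HasDerivAt f (f' t) t) (a b : ℝ) : IntervalIntegrable f' volume a b := by
  have hf' : f' =ᵐ[volume] deriv f := hd.mono fun _ ht => ht.deriv.symm
  refine (intervalIntegrable_const (c := (K : ℝ))).mono_fun
    ((aestronglyMeasurable_deriv f _).congr (ae_restrict_of_ae hf'.symm)) (ae_restrict_of_ae ?_)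
  filter_upwards [hf'] with t ht
  simpa [ht] using norm_deriv_le_of_lipschitz hf

theorem LipschitzWith.integral_eq_sub_of_ae_hasDerivAt (hf : LipschitzWith K f)
    (hd : ∀ᵐ t, HasDerivAt f (f' t) t) (a b : ℝ) : ∫ t in a..b, f' t = f b - f a := by
  -- The FTC for absolutely continuous functions is scalar; apply it to each `L ∘ f`.
  rw [← sub_eq_zero]
  refine SeparatingDual.eq_zero_of_forall_dual_eq_zero (R := ℝ) fun L => ?_
  have hLf : LipschitzWith (‖L‖₊ * K) (L ∘ f) := L.lipschitz.comp hf
  have hderiv : ∀ᵐ t, deriv (L ∘ f) t = L (f' t) :=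
    hd.mono fun t ht => (L.hasFDerivAt.comp_hasDerivAt t ht).deriv
  rw [map_sub, ← L.intervalIntegral_comp_comm (hf.intervalIntegrable_of_ae_hasDerivAt hd a b),
    ← integral_congr_ae (hderiv.mono fun t ht _ => ht),
    hLf.lipschitzOnWith.absolutelyContinuousOnInterval.integral_deriv_eq_sub]
  simp

end FTC

section UnitVector

variable {F : Type*} [NormedAddCommGroup F] [InnerProductSpace ℝ F] {u : F}

theorem one_sub_sq_div_two_le_inner {v : F} (hu : ‖u‖ = 1) (hv : ‖v‖ = 1) {ρ : ℝ}
    (hρ : ‖v - u‖ ≤ ρ) : 1 - ρ ^ 2 / 2 ≤ ⟪u, v⟫ := by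
  have := norm_sub_sq_real v u
  rw [hu, hv, real_inner_comm] at this
  nlinarith [norm_nonneg (v - u)]

theorem norm_sub_inner_smul_le (hu : ‖u‖ = 1) (v : F) : ‖v - ⟪u, v⟫ • u‖ ≤ ‖v - u‖ := by
  refine le_of_pow_le_pow_left₀ two_ne_zero (norm_nonneg _) ?_
  rw [norm_sub_sq_real, norm_sub_sq_real, inner_smul_right, norm_smul, real_inner_comm, hu,
    Real.norm_eq_abs]
  nlinarith [sq_abs ⟪v, u⟫, sq_nonneg (⟪v, u⟫ - 1)]

variable [CompleteSpace F] {g : ℝ → F} {a b r h : ℝ}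

theorem inner_integral_le (hu : ‖u‖ = 1) (hg : IntervalIntegrable g volume a b) (hab : a ≤ b)
    (hg1 : ∀ᵐ t, ‖g t‖ ≤ 1) : ⟪u, ∫ t in a..b, g t⟫ ≤ b - a := by
  rw [← innerSL_apply_apply ℝ, ← (innerSL ℝ u).intervalIntegral_comp_comm hg]
  have hbound : ∀ᵐ t, ⟪u, g t⟫ ≤ 1 := hg1.mono fun t ht =>
    (real_inner_le_norm u (g t)).trans (by rw [hu, one_mul]; exact ht)
  simpa using intervalIntegral.integral_mono_ae hab ⟨(innerSL ℝ u).integrable_comp hg.1, (innerSL ℝ u).integrable_comp hg.2⟩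
    intervalIntegrable_const hbound

theorem mul_one_sub_le_inner_integral (hu : ‖u‖ = 1) (hg : IntervalIntegrable g volume 0 h)
    (hh : 0 ≤ h) (hunit : ∀ᵐ t, ‖g t‖ = 1) (hclose : ∀ᵐ t, t ∈ Icc 0 h → ‖g t - u‖ ≤ t / r) :
    h * (1 - h ^ 2 / (6 * r ^ 2)) ≤ ⟪u, ∫ t in 0..h, g t⟫ := by
  rw [← innerSL_apply_apply ℝ, ← (innerSL ℝ u).intervalIntegral_comp_comm hg]
  have hbound : (fun t => 1 - t ^ 2 / (2 * r ^ 2)) ≤ᵐ[volume.restrict (Icc 0 h)]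
      fun t => ⟪u, g t⟫ := by
    filter_upwards [ae_restrict_of_ae (hunit.and hclose), ae_restrict_mem measurableSet_Icc]
      with t ⟨ht1, htu⟩ ht
    have := one_sub_sq_div_two_le_inner hu ht1 (htu ht)
    rwa [div_pow, div_div, mul_comm (r ^ 2)] at this
  have hmono := integral_mono_ae_restrict hh (Continuous.intervalIntegrable (by fun_prop) _ _)
    ⟨(innerSL ℝ u).integrable_comp hg.1, (innerSL ℝ u).integrable_comp hg.2⟩ hbound
  have hpoly : ∫ t in (0 : ℝ)..h, (1 - t ^ 2 / (2 * r ^ 2)) = h * (1 - h ^ 2 / (6 * r ^ 2)) := by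
    rw [integral_sub intervalIntegrable_const (Continuous.intervalIntegrable (by fun_prop) _ _), intervalIntegral.integral_div, integral_pow]
    simp only [intervalIntegral.integral_const, smul_eq_mul]
    ring
  simpa [hpoly] using hmono

theorem norm_integral_sub_inner_smul_le (hu : ‖u‖ = 1) (hg : IntervalIntegrable g volume 0 h)
    (hh : 0 ≤ h) (hclose : ∀ᵐ t, t ∈ Icc 0 h → ‖g t - u‖ ≤ t / r) :
    ‖(∫ t in 0..h, g t) - ⟪u, ∫ t in 0..h, g t⟫ • u‖ ≤ h ^ 2 / (2 * r) := by
  let P : F →L[ℝ] F := ContinuousLinearMap.id ℝ F - (innerSL ℝ u).smulRight u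
  have hP : ∀ x, P x = x - ⟪u, x⟫ • u := fun x => rfl
  rw [← hP, ← P.intervalIntegral_comp_comm hg]
  have hbound : ∀ᵐ t, t ∈ Ioc 0 h → ‖P (g t)‖ ≤ t / r := hclose.mono fun t ht htmem =>
    (norm_sub_inner_smul_le hu (g t)).trans (ht (Ioc_subset_Icc_self htmem))
  refine (norm_integral_le_of_norm_le hh hbound (Continuous.intervalIntegrable (by fun_prop) _ _)).trans_eq ?_
  rw [intervalIntegral.integral_div, integral_id]
  ring

end UnitVector

theorem norm_sub_inner_single_two_smul (x : E3) :
    ‖x - ⟪EuclideanSpace.single 2 1, x⟫ • EuclideanSpace.single 2 1‖ = √(x 0 ^ 2 + x 1 ^ 2) := by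
  simp [EuclideanSpace.norm_eq, Fin.sum_univ_three, EuclideanSpace.inner_single_left]

theorem stmt_4_general (γ γd : ℝ → E3)
    (hlip : LipschitzWith 1 γ)
    (hderiv : ∀ᵐ s, HasDerivAt γ (γd s) s)
    (hunit : ∀ᵐ s, ‖γd s‖ = 1)
    (h0 : γ 0 = 0) (hd0 : γd 0 = EuclideanSpace.single 2 1)
    (r₀ : ℝ)
    (htang : ∀ᵐ h, |h| ≤ r₀ → ‖γd h - γd 0‖ ≤ |h| / r₀) :
    (∀ᵐ h, 0 < h → h < r₀ →
        (1 - h ^ 2 / (2 * r₀ ^ 2) ≤ γd h 2 ∧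
         Real.sqrt ((γd h 0) ^ 2 + (γd h 1) ^ 2) ≤ h / r₀)) ∧
    (∀ h : ℝ, 0 < h → h < r₀ →
        (γ h 2 ≤ h ∧
         h * (1 - h ^ 2 / (6 * r₀ ^ 2)) ≤ γ h 2 ∧
         Real.sqrt ((γ h 0) ^ 2 + (γ h 1) ^ 2) ≤ h ^ 2 / (2 * r₀))) := by
  set u : E3 := EuclideanSpace.single 2 1
  have hu : ‖u‖ = 1 := by simp [u]
  have hpar (x : E3) : x 2 = ⟪u, x⟫ := by simp [u, EuclideanSpace.inner_single_left]
  have hclose : ∀ᵐ t, t ∈ Icc 0 r₀ → ‖γd t - u‖ ≤ t / r₀ := by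
    filter_upwards [htang] with t ht hmem
    simpa [hd0, abs_of_nonneg hmem.1] using ht ((abs_of_nonneg hmem.1).trans_le hmem.2)
  refine ⟨?_, fun h hh hhr => ?_⟩
  · filter_upwards [hunit, hclose] with t ht1 htu ht htr
    have htu := htu ⟨ht.le, htr.le⟩
    rw [hpar, ← norm_sub_inner_single_two_smul]
    refine ⟨?_, (norm_sub_inner_smul_le hu _).trans htu⟩
    have := one_sub_sq_div_two_le_inner hu ht1 htu
    rwa [div_pow, div_div, mul_comm (r₀ ^ 2)] at this
  · have hγ : γ h = ∫ t in 0..h, γd t := by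
      rw [hlip.integral_eq_sub_of_ae_hasDerivAt hderiv, h0, sub_zero]
    have hint := hlip.intervalIntegrable_of_ae_hasDerivAt hderiv 0 h
    have hclose' : ∀ᵐ t, t ∈ Icc 0 h → ‖γd t - u‖ ≤ t / r₀ := hclose.mono fun t ht htmem =>
      ht ⟨htmem.1, htmem.2.trans hhr.le⟩
    rw [hpar, ← norm_sub_inner_single_two_smul, hγ]
    exact ⟨(inner_integral_le hu hint hh.le (hunit.mono fun _ ht => ht.le)).trans_eq (sub_zero h),
      mul_one_sub_le_inner_integral hu hint hh.le hunit hclose',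
      norm_integral_sub_inner_smul_le hu hint hh.le hclose'⟩

/-- local straightness of a unit-speed curve on the scale of the security radius.
Coordinates are chosen with `γ(0) = 0` and `γ'(0) = e₃`; `γ_∥` is the third component and
`γ_⊥` the first two. -/
theorem stmt_4 (γ γd : ℝ → E3)
    (hper : ∀ t, γ (t + 1) = γ t)
    (hlip : LipschitzWith 1 γ)
    (hderiv : ∀ᵐ s, HasDerivAt γ (γd s) s)
    (hunit : ∀ᵐ s, ‖γd s‖ = 1)
    (h0 : γ 0 = 0) (hd0 : γd 0 = EuclideanSpace.single 2 1)
    (r₀ : ℝ) (hr₀ : 0 < r₀)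
    (hfar : ∀ h : ℝ, r₀ ≤ |h| → |h| ≤ 1/2 → r₀ / 2 ≤ ‖γ h - γ 0‖)
    (htang : ∀ᵐ h, |h| ≤ r₀ → ‖γd h - γd 0‖ ≤ |h| / r₀) :
    (∀ᵐ h, 0 < h → h < r₀ →
        (1 - h ^ 2 / (2 * r₀ ^ 2) ≤ γd h 2 ∧
         Real.sqrt ((γd h 0) ^ 2 + (γd h 1) ^ 2) ≤ h / r₀)) ∧
    (∀ h : ℝ, 0 < h → h < r₀ →
        (γ h 2 ≤ h ∧
         h * (1 - h ^ 2 / (6 * r₀ ^ 2)) ≤ γ h 2 ∧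
         Real.sqrt ((γ h 0) ^ 2 + (γ h 1) ^ 2) ≤ h ^ 2 / (2 * r₀))) :=
  stmt_4_general γ γd hlip hderiv hunit h0 hd0 r₀ htang
end
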